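/- Let U: R^d → R be C² satisfying: (a) θ·∇U(θ) ≥ c₁|θ|² − C₁ for all θ with constants c₁ > 0, C₁ ∈ R; (b) ∇U is m_U-Lipschitz with U achieving its minimum (so |∇U(θ)| ≤ m_U|θ − θ*| for a minimizer θ*). Fix α, β > 0 and a ∈ (0,1). Then there exist b > 0 and constants A, B, C > 0 such that, with φ(θ,r) = a(U(θ) + |r|²/2) + b θ·r and W = e^φ, the Hessian-free high-resolution generator L_R = (−β∇U + r)·∇_θ + (−αr − ∇U)·∇_r + βΔ_θ + αΔ_r satisfies −(L_R W)/W ≥ A|θ|² + B|r|² − C for all (θ,r) ∈ R^d × R^d. -/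

import Mathlib

open scoped RealInnerProductSpace

/-- Directional derivative in the i-th θ-coordinate on `E × E`, `E = EuclideanSpace ℝ (Fin d)`. -/
noncomputable def DTheta {d : ℕ} (i : Fin d)
    (f : EuclideanSpace ℝ (Fin d) × EuclideanSpace ℝ (Fin d) → ℝ)
    (x : EuclideanSpace ℝ (Fin d) × EuclideanSpace ℝ (Fin d)) : ℝ :=
  fderiv ℝ f x (EuclideanSpace.single i 1, 0)

/-- Directional derivative in the i-th r-coordinate. -/
noncomputable def DR {d : ℕ} (i : Fin d)
    (f : EuclideanSpace ℝ (Fin d) × EuclideanSpace ℝ (Fin d) → ℝ)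
    (x : EuclideanSpace ℝ (Fin d) × EuclideanSpace ℝ (Fin d)) : ℝ :=
  fderiv ℝ f x (0, EuclideanSpace.single i 1)

/-- i-th partial derivative of `U`. -/
noncomputable def pdUe {d : ℕ} (i : Fin d) (U : EuclideanSpace ℝ (Fin d) → ℝ)
    (θ : EuclideanSpace ℝ (Fin d)) : ℝ :=
  fderiv ℝ U θ (EuclideanSpace.single i 1)

/-- Generator of the Hessian-free high-resolution dynamics:
`L_R = (−β∇U+r)·∇_θ + (−αr−∇U)·∇_r + βΔ_θ + αΔ_r`. -/
noncomputable def LRe {d : ℕ} (U : EuclideanSpace ℝ (Fin d) → ℝ) (α β : ℝ)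
    (f : EuclideanSpace ℝ (Fin d) × EuclideanSpace ℝ (Fin d) → ℝ)
    (x : EuclideanSpace ℝ (Fin d) × EuclideanSpace ℝ (Fin d)) : ℝ :=
  (∑ i, (-(β * pdUe i U x.1) + x.2 i) * DTheta i f x)
    + (∑ i, (-(α * x.2 i) - pdUe i U x.1) * DR i f x)
    + β * ∑ i, DTheta i (DTheta i f) x
    + α * ∑ i, DR i (DR i f) x

/-!
For `W = exp φ` the generator satisfies `L_R W / W = L_R φ + β |∇_θ φ|² + α |∇_r φ|²`. With
`g = ∇U(θ)` we have `∇_θ φ = a g + b r` and `∇_r φ = a r + b θ`, so `L_R W / W` is a quadratic form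
in `(g, θ, r)` plus `a β ΔU + a α d`, and `ΔU ≤ m_U d` because `∇U` is `m_U`-Lipschitz.
In that quadratic form the coefficient of `|g|²` is `-a β (1 - a)`, that of `|r|²` is
`-a α (1 - a) + O(b)`, and the cross term `-b θ·g` contributes `-b c₁ |θ|²` by the drift condition;
for small `b > 0` the remaining cross terms are absorbed by Young's inequality.
-/

section ExpComp

variable {F : Type*} [NormedAddCommGroup F] [NormedSpace ℝ F] {φ : F → ℝ}

theorem fderiv_exp_comp_apply {x : F} (hφ : DifferentiableAt ℝ φ x) (v : F) :
    fderiv ℝ (fun y => Real.exp (φ y)) x v = Real.exp (φ x) * fderiv ℝ φ x v := by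
  rw [fderiv_exp hφ]; rfl

theorem fderiv_fderiv_exp_comp_apply (hφ : ContDiff ℝ 2 φ) (x v : F) :
    fderiv ℝ (fun y => fderiv ℝ (fun z => Real.exp (φ z)) y v) x v =
      Real.exp (φ x) * (fderiv ℝ φ x v ^ 2 + fderiv ℝ (fun y => fderiv ℝ φ y v) x v) := by
  have hφ₁ : Differentiable ℝ φ := hφ.differentiable (by norm_num)
  have hφv : Differentiable ℝ (fun y => fderiv ℝ φ y v) :=
    ((hφ.fderiv_right (m := 1) (by norm_num)).differentiable (by norm_num)).clm_apply
      (differentiable_const v)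
  have h : (fun y => fderiv ℝ (fun z => Real.exp (φ z)) y v) =
      fun y => Real.exp (φ y) * fderiv ℝ φ y v :=
    funext fun y => fderiv_exp_comp_apply (hφ₁ y) v
  rw [h, fderiv_fun_mul (hφ₁ x).exp (hφv x)]
  simp only [add_apply, smul_apply, smul_eq_mul, fderiv_exp_comp_apply (hφ₁ x)]
  ring

end ExpComp

theorem fderiv_fderiv_apply_le_of_lipschitzWith_gradient {E : Type*} [NormedAddCommGroup E]
    [InnerProductSpace ℝ E] [CompleteSpace E] {f : E → ℝ} {K : NNReal}
    (hf : LipschitzWith K (gradient f)) (x v : E) :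
    fderiv ℝ (fun y => fderiv ℝ f y v) x v ≤ K * ‖v‖ ^ 2 := by
  have hfv : LipschitzWith (‖v‖₊ * K) (fun y => fderiv ℝ f y v) := by
    have h : (fun y => fderiv ℝ f y v) = innerSL ℝ v ∘ gradient f :=
      funext fun y => by
        rw [Function.comp_apply, innerSL_apply_apply, real_inner_comm, gradient,
          InnerProductSpace.toDual_symm_apply]
    have hv : ‖innerSL ℝ v‖₊ = ‖v‖₊ := by ext; exact innerSL_apply_norm ℝ v
    rw [h, ← hv]
    exact (innerSL ℝ v).lipschitz.comp hf
  calc fderiv ℝ (fun y => fderiv ℝ f y v) x v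
      ≤ ‖fderiv ℝ (fun y => fderiv ℝ f y v) x‖ * ‖v‖ :=
        (Real.le_norm_self _).trans (ContinuousLinearMap.le_opNorm _ _)
    _ ≤ (‖v‖ * K) * ‖v‖ := by gcongr; exact_mod_cast norm_fderiv_le_of_lipschitz ℝ hfv
    _ = K * ‖v‖ ^ 2 := by ring

section LogLyapunov

variable {E : Type*} [NormedAddCommGroup E] [InnerProductSpace ℝ E] {U : E → ℝ} {a b : ℝ}

noncomputable def logLyapunov (U : E → ℝ) (a b : ℝ) (x : E × E) : ℝ :=
  a * (U x.1 + ‖x.2‖ ^ 2 / 2) + b * ⟪x.1, x.2⟫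

theorem contDiff_logLyapunov (hU : ContDiff ℝ 2 U) : ContDiff ℝ 2 (logLyapunov U a b) :=
  (((hU.comp contDiff_fst).add (((contDiff_norm_sq ℝ).comp contDiff_snd).div_const 2)).const_smul
    a).add ((contDiff_fst.inner ℝ contDiff_snd).const_smul b)

theorem fderiv_logLyapunov_apply {x : E × E} (hU : DifferentiableAt ℝ U x.1) (v w : E) :
    fderiv ℝ (logLyapunov U a b) x (v, w) =
      a * (fderiv ℝ U x.1 v + ⟪x.2, w⟫) + b * (⟪v, x.2⟫ + ⟪x.1, w⟫) := by
  have hU₁ : HasFDerivAt (fun y : E × E => U y.1) _ x := hU.hasFDerivAt.comp x hasFDerivAt_fst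
  have hsq : HasFDerivAt (fun y : E × E => ‖y.2‖ ^ 2) _ x :=
    (hasStrictFDerivAt_norm_sq x.2).hasFDerivAt.comp x hasFDerivAt_snd
  have hin := (hasFDerivAt_fst (p := x)).inner ℝ (hasFDerivAt_snd (p := x))
  have h : HasFDerivAt (logLyapunov U a b) _ x :=
    .fun_add (.const_mul (.fun_add hU₁ (.mul_const hsq 2⁻¹)) a) (.const_mul hin b)
  rw [h.fderiv]
  simp only [ContinuousLinearMap.smul_comp, smul_add, ContinuousLinearMap.fst_prod_snd,
    ContinuousLinearMap.comp_id, add_apply, smul_apply, ContinuousLinearMap.comp_apply,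
    ContinuousLinearMap.coe_fst', ContinuousLinearMap.coe_snd', smul_eq_mul, coe_innerSL_apply,
    nsmul_eq_mul, Nat.cast_ofNat, fderivInnerCLM_apply]
  ring

theorem fderiv_fderiv_logLyapunov_apply_inl (hU : ContDiff ℝ 2 U) (x : E × E) (v : E) :
    fderiv ℝ (fun y => fderiv ℝ (logLyapunov U a b) y (v, 0)) x (v, 0) =
      a * fderiv ℝ (fun θ => fderiv ℝ U θ v) x.1 v := by
  have hU₁ : Differentiable ℝ U := hU.differentiable (by norm_num)
  have hUv : Differentiable ℝ (fun θ => fderiv ℝ U θ v) :=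
    ((hU.fderiv_right (m := 1) (by norm_num)).differentiable (by norm_num)).clm_apply
      (differentiable_const v)
  have h : (fun y => fderiv ℝ (logLyapunov U a b) y (v, 0)) =
      fun y : E × E => a * fderiv ℝ U y.1 v + b * ⟪v, y.2⟫ := by
    funext y; rw [fderiv_logLyapunov_apply (hU₁ _)]; simp
  have hd : HasFDerivAt (fun y : E × E => a * fderiv ℝ U y.1 v + b * ⟪v, y.2⟫) _ x :=
    .fun_add (.const_mul ((hUv x.1).hasFDerivAt.comp x hasFDerivAt_fst) a)
      (.const_mul ((hasFDerivAt_const v x).inner ℝ hasFDerivAt_snd) b)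
  rw [h, hd.fderiv]
  simp

theorem fderiv_fderiv_logLyapunov_apply_inr (hU : Differentiable ℝ U) (x : E × E) (w : E) :
    fderiv ℝ (fun y => fderiv ℝ (logLyapunov U a b) y (0, w)) x (0, w) = a * ‖w‖ ^ 2 := by
  have h : (fun y => fderiv ℝ (logLyapunov U a b) y (0, w)) =
      fun y : E × E => a * ⟪y.2, w⟫ + b * ⟪y.1, w⟫ := by
    funext y; rw [fderiv_logLyapunov_apply (hU _)]; simp
  have hd : HasFDerivAt (fun y : E × E => a * ⟪y.2, w⟫ + b * ⟪y.1, w⟫) _ x :=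
    .fun_add (.const_mul (hasFDerivAt_snd.inner ℝ (hasFDerivAt_const w x)) a)
      (.const_mul (hasFDerivAt_fst.inner ℝ (hasFDerivAt_const w x)) b)
  rw [h, hd.fderiv]
  simp

end LogLyapunov

theorem EuclideanSpace.sum_mul_eq_inner {ι : Type*} [Fintype ι] (u w : EuclideanSpace ℝ ι) :
    ∑ i, u i * w i = ⟪u, w⟫ := by
  simp [PiLp.inner_apply, mul_comm]

section Generator

variable {d : ℕ} {U : EuclideanSpace ℝ (Fin d) → ℝ} {α β a b : ℝ}

theorem pdUe_eq_gradient_apply (i : Fin d) (θ : EuclideanSpace ℝ (Fin d)) :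
    pdUe i U θ = gradient U θ i := by
  rw [pdUe, gradient, ← InnerProductSpace.toDual_symm_apply, EuclideanSpace.inner_single_right]
  simp

theorem sum_fderiv_pdUe_le {K : NNReal} (hU : LipschitzWith K (gradient U))
    (θ : EuclideanSpace ℝ (Fin d)) :
    ∑ i, fderiv ℝ (pdUe i U) θ (EuclideanSpace.single i 1) ≤ K * d :=
  calc ∑ i, fderiv ℝ (pdUe i U) θ (EuclideanSpace.single i 1)
      ≤ ∑ i : Fin d, K * ‖EuclideanSpace.single i (1 : ℝ)‖ ^ 2 :=
        Finset.sum_le_sum fun i _ => fderiv_fderiv_apply_le_of_lipschitzWith_gradient hU θ _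
    _ = K * d := by simp [mul_comm]

theorem LRe_exp_comp {φ : EuclideanSpace ℝ (Fin d) × EuclideanSpace ℝ (Fin d) → ℝ}
    (hφ : ContDiff ℝ 2 φ) (x : EuclideanSpace ℝ (Fin d) × EuclideanSpace ℝ (Fin d)) :
    LRe U α β (fun y => Real.exp (φ y)) x = Real.exp (φ x) *
      (LRe U α β φ x + β * ∑ i, DTheta i φ x ^ 2 + α * ∑ i, DR i φ x ^ 2) := by
  have hφ₁ : DifferentiableAt ℝ φ x := hφ.differentiable (by norm_num) x
  have hθ (i : Fin d) : DTheta i (fun y => Real.exp (φ y)) x = Real.exp (φ x) * DTheta i φ x :=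
    fderiv_exp_comp_apply hφ₁ _
  have hr (i : Fin d) : DR i (fun y => Real.exp (φ y)) x = Real.exp (φ x) * DR i φ x :=
    fderiv_exp_comp_apply hφ₁ _
  have hθθ (i : Fin d) : DTheta i (DTheta i (fun y => Real.exp (φ y))) x =
      Real.exp (φ x) * (DTheta i φ x ^ 2 + DTheta i (DTheta i φ) x) :=
    fderiv_fderiv_exp_comp_apply hφ x _
  have hrr (i : Fin d) : DR i (DR i (fun y => Real.exp (φ y))) x =
      Real.exp (φ x) * (DR i φ x ^ 2 + DR i (DR i φ) x) :=
    fderiv_fderiv_exp_comp_apply hφ x _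
  simp only [LRe, hθ, hr, hθθ, hrr, mul_add, Finset.mul_sum, ← Finset.sum_add_distrib]
  exact Finset.sum_congr rfl fun i _ => by ring

theorem DTheta_logLyapunov {x : EuclideanSpace ℝ (Fin d) × EuclideanSpace ℝ (Fin d)}
    (hU : DifferentiableAt ℝ U x.1) (i : Fin d) :
    DTheta i (logLyapunov U a b) x = (a • gradient U x.1 + b • x.2) i := by
  rw [DTheta, fderiv_logLyapunov_apply hU, ← pdUe, pdUe_eq_gradient_apply]
  simp [EuclideanSpace.inner_single_left]

theorem DR_logLyapunov {x : EuclideanSpace ℝ (Fin d) × EuclideanSpace ℝ (Fin d)}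
    (hU : DifferentiableAt ℝ U x.1) (i : Fin d) :
    DR i (logLyapunov U a b) x = (a • x.2 + b • x.1) i := by
  rw [DR, fderiv_logLyapunov_apply hU]
  simp [EuclideanSpace.inner_single_right]

theorem LRe_logLyapunov (hU : ContDiff ℝ 2 U)
    (x : EuclideanSpace ℝ (Fin d) × EuclideanSpace ℝ (Fin d)) :
    LRe U α β (logLyapunov U a b) x =
      ⟪-(β • gradient U x.1) + x.2, a • gradient U x.1 + b • x.2⟫
        + ⟪-(α • x.2) - gradient U x.1, a • x.2 + b • x.1⟫
        + a * β * ∑ i, fderiv ℝ (pdUe i U) x.1 (EuclideanSpace.single i 1) + a * α * d := by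
  have hU₁ : Differentiable ℝ U := hU.differentiable (by norm_num)
  have hθθ (i : Fin d) : DTheta i (DTheta i (logLyapunov U a b)) x =
      a * fderiv ℝ (pdUe i U) x.1 (EuclideanSpace.single i 1) :=
    fderiv_fderiv_logLyapunov_apply_inl hU x _
  have hrr (i : Fin d) : DR i (DR i (logLyapunov U a b)) x = a :=
    (fderiv_fderiv_logLyapunov_apply_inr hU₁ x _).trans (by simp)
  have hd : a * α * d = ∑ _i : Fin d, a * α := by simp [mul_comm]
  rw [← EuclideanSpace.sum_mul_eq_inner, ← EuclideanSpace.sum_mul_eq_inner, hd]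
  simp only [LRe, hθθ, hrr, DTheta_logLyapunov (hU₁ _), DR_logLyapunov (hU₁ _),
    pdUe_eq_gradient_apply, Finset.mul_sum, ← Finset.sum_add_distrib]
  refine Finset.sum_congr rfl fun i _ => ?_
  simp only [PiLp.add_apply, PiLp.sub_apply, PiLp.neg_apply, PiLp.smul_apply, smul_eq_mul]
  ring

theorem LRe_exp_logLyapunov_div (hU : ContDiff ℝ 2 U)
    (x : EuclideanSpace ℝ (Fin d) × EuclideanSpace ℝ (Fin d)) :
    LRe U α β (fun y => Real.exp (logLyapunov U a b y)) x / Real.exp (logLyapunov U a b x) =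
      ⟪-(β • gradient U x.1) + x.2, a • gradient U x.1 + b • x.2⟫
        + ⟪-(α • x.2) - gradient U x.1, a • x.2 + b • x.1⟫
        + β * ‖a • gradient U x.1 + b • x.2‖ ^ 2 + α * ‖a • x.2 + b • x.1‖ ^ 2
        + a * β * ∑ i, fderiv ℝ (pdUe i U) x.1 (EuclideanSpace.single i 1) + a * α * d := by
  have hU₁ : Differentiable ℝ U := hU.differentiable (by norm_num)
  rw [LRe_exp_comp (contDiff_logLyapunov hU), mul_div_cancel_left₀ _ (Real.exp_pos _).ne',
    LRe_logLyapunov hU]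
  simp only [DTheta_logLyapunov (hU₁ _), DR_logLyapunov (hU₁ _), ← EuclideanSpace.real_norm_sq_eq]
  ring

end Generator

section GradientTerms

variable {E : Type*} [NormedAddCommGroup E] [InnerProductSpace ℝ E] {α β a b c₁ C₁ : ℝ}

theorem hfhr_gradient_terms_le (hα : 0 ≤ α) (hβ : 0 ≤ β) (ha0 : 0 ≤ a) (ha1 : a ≤ 1)
    (hc₁ : 0 < c₁) (hb : 0 ≤ b) (hbg : b ≤ 2 * a * (1 - a)) (hbθ : α * b ≤ c₁ / 4)
    (hbr : b * (1 + β * b + β / 2 + α ^ 2 / c₁) ≤ a * α * (1 - a) / 2)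
    {g θ r : E} (hdrift : c₁ * ‖θ‖ ^ 2 - C₁ ≤ ⟪θ, g⟫) :
    ⟪-(β • g) + r, a • g + b • r⟫ + ⟪-(α • r) - g, a • r + b • θ⟫
        + β * ‖a • g + b • r‖ ^ 2 + α * ‖a • r + b • θ‖ ^ 2
      ≤ b * |C₁| - b * c₁ / 2 * ‖θ‖ ^ 2 - a * α * (1 - a) / 2 * ‖r‖ ^ 2 := by
  have hexpand : ⟪-(β • g) + r, a • g + b • r⟫ + ⟪-(α • r) - g, a • r + b • θ⟫
        + β * ‖a • g + b • r‖ ^ 2 + α * ‖a • r + b • θ‖ ^ 2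
      = -(a * β * (1 - a)) * ‖g‖ ^ 2 + (2 * a - 1) * b * β * ⟪g, r⟫
        + (b + β * b ^ 2 - a * α * (1 - a)) * ‖r‖ ^ 2 + (2 * a - 1) * b * α * ⟪θ, r⟫
        + α * b ^ 2 * ‖θ‖ ^ 2 - b * ⟪θ, g⟫ := by
    simp only [norm_add_sq_real, norm_smul, inner_add_left, inner_add_right, inner_neg_left,
      inner_sub_left, inner_smul_left, inner_smul_right, real_inner_self_eq_norm_sq,
      Real.norm_eq_abs, mul_pow, sq_abs, RCLike.conj_to_real]
    rw [real_inner_comm θ r, real_inner_comm g θ, real_inner_comm r g]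
    ring
  have h2a : |2 * a - 1| ≤ 1 := abs_le.2 ⟨by linarith, by linarith⟩
  have hcs (u v : E) : (2 * a - 1) * ⟪u, v⟫ ≤ ‖u‖ * ‖v‖ :=
    calc (2 * a - 1) * ⟪u, v⟫ ≤ |2 * a - 1| * |⟪u, v⟫| := (le_abs_self _).trans (abs_mul _ _).le
      _ ≤ 1 * (‖u‖ * ‖v‖) := mul_le_mul h2a (abs_real_inner_le_norm u v) (abs_nonneg _) zero_le_one
      _ = ‖u‖ * ‖v‖ := one_mul _
  have hgr : ‖g‖ * ‖r‖ ≤ (‖g‖ ^ 2 + ‖r‖ ^ 2) / 2 := by nlinarith [two_mul_le_add_sq ‖g‖ ‖r‖]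
  have hθr : α * (‖θ‖ * ‖r‖) ≤ c₁ / 4 * ‖θ‖ ^ 2 + α ^ 2 / c₁ * ‖r‖ ^ 2 := by
    have h : c₁ * (c₁ / 4 * ‖θ‖ ^ 2 + α ^ 2 / c₁ * ‖r‖ ^ 2 - α * (‖θ‖ * ‖r‖))
        = (c₁ * ‖θ‖ - 2 * α * ‖r‖) ^ 2 / 4 := by field_simp; ring
    nlinarith [sq_nonneg (c₁ * ‖θ‖ - 2 * α * ‖r‖)]
  rw [hexpand]
  linarith [mul_le_mul_of_nonneg_left (hcs g r) (mul_nonneg hb hβ),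
    mul_le_mul_of_nonneg_left hgr (mul_nonneg hb hβ),
    mul_le_mul_of_nonneg_left (hcs θ r) (mul_nonneg hb hα), mul_le_mul_of_nonneg_left hθr hb,
    mul_le_mul_of_nonneg_left hbg (mul_nonneg hβ (sq_nonneg ‖g‖)),
    mul_le_mul_of_nonneg_left hbθ (mul_nonneg hb (sq_nonneg ‖θ‖)),
    mul_le_mul_of_nonneg_right hbr (sq_nonneg ‖r‖),
    mul_le_mul_of_nonneg_left hdrift hb, mul_le_mul_of_nonneg_left (le_abs_self C₁) hb]

open Filter Topology in
theorem eventually_hfhr_gradient_terms_le (hα : 0 < α) (hβ : 0 ≤ β) (ha0 : 0 < a) (ha1 : a < 1)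
    (hc₁ : 0 < c₁) :
    ∀ᶠ b in 𝓝[>] 0, ∀ g θ r : E, c₁ * ‖θ‖ ^ 2 - C₁ ≤ ⟪θ, g⟫ →
      ⟪-(β • g) + r, a • g + b • r⟫ + ⟪-(α • r) - g, a • r + b • θ⟫
          + β * ‖a • g + b • r‖ ^ 2 + α * ‖a • r + b • θ‖ ^ 2
        ≤ b * |C₁| - b * c₁ / 2 * ‖θ‖ ^ 2 - a * α * (1 - a) / 2 * ‖r‖ ^ 2 := by
  have ha : 0 < 1 - a := sub_pos.2 ha1
  have small {f : ℝ → ℝ} (hf : Continuous f) (hf0 : f 0 = 0) {c : ℝ} (hc : 0 < c) :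
      ∀ᶠ b in 𝓝 0, f b < c :=
    (hf.tendsto' 0 0 hf0).eventually_lt_const hc
  have hbg := small continuous_id rfl (by positivity : 0 < 2 * a * (1 - a))
  have hbθ := small (f := fun b => α * b) (by fun_prop) (by simp) (by positivity : 0 < c₁ / 4)
  have hbr := small (f := fun b => b * (1 + β * b + β / 2 + α ^ 2 / c₁)) (by fun_prop) (by simp)
    (by positivity : 0 < a * α * (1 - a) / 2)
  filter_upwards [nhdsWithin_le_nhds (hbg.and (hbθ.and hbr)), self_mem_nhdsWithin]
    with b ⟨hbg, hbθ, hbr⟩ hb g θ r hdrift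
  exact hfhr_gradient_terms_le hα.le hβ ha0.le ha1.le hc₁ (le_of_lt hb) hbg.le hbθ.le hbr.le hdrift

end GradientTerms

theorem hfhr_lyapunov_condition_general (d : ℕ) (α β : ℝ) (hα : 0 < α) (hβ : 0 < β)
    (a : ℝ) (ha0 : 0 < a) (ha1 : a < 1)
    (U : EuclideanSpace ℝ (Fin d) → ℝ) (hU : ContDiff ℝ 2 U)
    (c₁ C₁ : ℝ) (hc₁ : 0 < c₁)
    (hdrift : ∀ θ, ⟪θ, gradient U θ⟫ ≥ c₁ * ‖θ‖ ^ 2 - C₁)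
    (m_U : ℝ)
    (hLip : ∀ θ₁ θ₂, ‖gradient U θ₁ - gradient U θ₂‖ ≤ m_U * ‖θ₁ - θ₂‖) :
    ∃ b > 0, ∃ A > 0, ∃ B > 0, ∃ C > 0,
      ∀ x : EuclideanSpace ℝ (Fin d) × EuclideanSpace ℝ (Fin d),
        -(LRe U α β
            (fun y => Real.exp (a * (U y.1 + ‖y.2‖ ^ 2 / 2) + b * ⟪y.1, y.2⟫)) x)
          / Real.exp (a * (U x.1 + ‖x.2‖ ^ 2 / 2) + b * ⟪x.1, x.2⟫)
        ≥ A * ‖x.1‖ ^ 2 + B * ‖x.2‖ ^ 2 - C := by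
  obtain ⟨b, hgradient, hb⟩ :=
    ((eventually_hfhr_gradient_terms_le (E := EuclideanSpace ℝ (Fin d)) (C₁ := C₁)
      hα hβ.le ha0 ha1 hc₁).and self_mem_nhdsWithin).exists
  have hK : LipschitzWith m_U.toNNReal (gradient U) :=
    .of_dist_le' fun θ₁ θ₂ => by simpa only [dist_eq_norm] using hLip θ₁ θ₂
  have ha : 0 < 1 - a := sub_pos.2 ha1
  refine ⟨b, hb, b * c₁ / 2, by positivity, a * α * (1 - a) / 2, by positivity,
    b * |C₁| + a * (β * m_U.toNNReal + α) * d + 1, by positivity, fun x => ?_⟩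
  have hW := LRe_exp_logLyapunov_div (α := α) (β := β) (a := a) (b := b) hU x
  have hΔ := mul_le_mul_of_nonneg_left (sum_fderiv_pdUe_le hK x.1) (by positivity : 0 ≤ a * β)
  simp only [logLyapunov] at hW
  rw [ge_iff_le, neg_div, hW]
  linarith [hgradient _ x.1 x.2 (hdrift x.1)]

theorem hfhr_lyapunov_condition (d : ℕ) (α β : ℝ) (hα : 0 < α) (hβ : 0 < β)
    (a : ℝ) (ha0 : 0 < a) (ha1 : a < 1)
    (U : EuclideanSpace ℝ (Fin d) → ℝ) (hU : ContDiff ℝ 2 U)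
    (c₁ C₁ : ℝ) (hc₁ : 0 < c₁)
    (hdrift : ∀ θ, ⟪θ, gradient U θ⟫ ≥ c₁ * ‖θ‖ ^ 2 - C₁)
    (m_U : ℝ) (hm : 0 < m_U)
    (hLip : ∀ θ₁ θ₂, ‖gradient U θ₁ - gradient U θ₂‖ ≤ m_U * ‖θ₁ - θ₂‖)
    (hmin : ∃ θs, ∀ θ, U θs ≤ U θ) :
    ∃ b > 0, ∃ A > 0, ∃ B > 0, ∃ C > 0,
      ∀ x : EuclideanSpace ℝ (Fin d) × EuclideanSpace ℝ (Fin d),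
        -(LRe U α β
            (fun y => Real.exp (a * (U y.1 + ‖y.2‖ ^ 2 / 2) + b * ⟪y.1, y.2⟫)) x)
          / Real.exp (a * (U x.1 + ‖x.2‖ ^ 2 / 2) + b * ⟪x.1, x.2⟫)
        ≥ A * ‖x.1‖ ^ 2 + B * ‖x.2‖ ^ 2 - C :=
  hfhr_lyapunov_condition_general d α β hα hβ a ha0 ha1 U hU c₁ C₁ hc₁ hdrift m_U hLip
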